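/- arXiv:2012.06376 — 3 statements merged into one kernel-verified Lean document; each statement's English description precedes it below -/
import Mathlib

section
/- Let x* ∈ ℝ^n, define f(p̂) := Σ_{i=1}^N c_i − S p̂ − x*, and let p' ∈ B satisfy (Σ_{i=1}^N (c_i − Q_i⁻¹ p') − x*)ᵀ (p' − s) ≥ 0 for all s ∈ B. Then for every p̂ ∈ B and every vector w ∈ ℝ^n satisfying ⟨w, s − p̂⟩ ≤ 0 for all s ∈ B, one has ⟨p̂ − p', f(p̂) − w⟩ ≤ −(p̂ − p')ᵀ S (p̂ − p'). -/
open scoped RealInnerProductSpace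
open Matrix

noncomputable section

/-- The action of a real `n × n` matrix on Euclidean space. -/
def mvec {n : ℕ} (M : Matrix (Fin n) (Fin n) ℝ) (x : EuclideanSpace ℝ (Fin n)) :
    EuclideanSpace ℝ (Fin n) :=
  Matrix.toEuclideanLin M x

/-- Pairing the variational inequality of `p'` (field value `u`) with the normal-cone
inequality of `w` at `p̂`, each tested at the other point, lets `w` be traded for `u`. -/
theorem inner_sub_normal_le_inner_sub_of_variational {E : Type*} [NormedAddCommGroup E]
    [InnerProductSpace ℝ E] {B : Set E} {p' phat u w : E} (hp' : p' ∈ B) (hphat : phat ∈ B)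
    (hu : ∀ s ∈ B, 0 ≤ ⟪u, p' - s⟫) (hw : ∀ s ∈ B, ⟪w, s - phat⟫ ≤ 0) (v : E) :
    ⟪phat - p', v - w⟫ ≤ ⟪phat - p', v - u⟫ := by
  have hu' : ⟪phat - p', u⟫ ≤ 0 := by
    rw [real_inner_comm, ← neg_sub, inner_neg_right]
    linarith [hu phat hphat]
  have hw' : 0 ≤ ⟪phat - p', w⟫ := by
    rw [real_inner_comm, ← neg_sub, inner_neg_right]
    linarith [hw p' hp']
  rw [inner_sub_right, inner_sub_right]
  linarith

theorem mvec_sub {n : ℕ} (M : Matrix (Fin n) (Fin n) ℝ) (x y : EuclideanSpace ℝ (Fin n)) :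
    mvec M (x - y) = mvec M x - mvec M y :=
  map_sub _ x y

theorem mvec_sum {n N : ℕ} (M : Fin N → Matrix (Fin n) (Fin n) ℝ)
    (x : EuclideanSpace ℝ (Fin n)) : mvec (∑ i, M i) x = ∑ i, mvec (M i) x := by
  simp only [mvec, map_sum, LinearMap.sum_apply]

theorem statement_8_general (n N : ℕ)
    (Q : Fin N → Matrix (Fin n) (Fin n) ℝ)
    (c : Fin N → EuclideanSpace ℝ (Fin n))
    (S : Matrix (Fin n) (Fin n) ℝ) (hS : S = ∑ i, (Q i)⁻¹)
    (B : Set (EuclideanSpace ℝ (Fin n)))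
    (xstar : EuclideanSpace ℝ (Fin n))
    (f : EuclideanSpace ℝ (Fin n) → EuclideanSpace ℝ (Fin n))
    (hf : ∀ phat, f phat = (∑ i, c i) - mvec S phat - xstar)
    (p' : EuclideanSpace ℝ (Fin n)) (hp' : p' ∈ B)
    (hVI : ∀ s ∈ B, 0 ≤ ⟪(∑ i, (c i - mvec (Q i)⁻¹ p')) - xstar, p' - s⟫)
    (phat : EuclideanSpace ℝ (Fin n)) (hphat : phat ∈ B)
    (w : EuclideanSpace ℝ (Fin n)) (hw : ∀ s ∈ B, ⟪w, s - phat⟫ ≤ 0) :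
    ⟪phat - p', f phat - w⟫ ≤ -⟪phat - p', mvec S (phat - p')⟫ := by
  have hfield : (∑ i, (c i - mvec (Q i)⁻¹ p')) - xstar = f p' := by
    rw [hf, hS, mvec_sum, Finset.sum_sub_distrib]
  have hincrement : f phat - f p' = -mvec S (phat - p') := by
    rw [hf, hf, mvec_sub]
    abel
  rw [hfield] at hVI
  calc ⟪phat - p', f phat - w⟫ ≤ ⟪phat - p', f phat - f p'⟫ :=
        inner_sub_normal_le_inner_sub_of_variational hp' hphat hVI hw _
    _ = -⟪phat - p', mvec S (phat - p')⟫ := by rw [hincrement, inner_neg_right]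

/-- If `p' ∈ B` satisfies `⟨∑ i (c i − (Q i)⁻¹ p') − x*, p' − s⟩ ≥ 0` on `B`,
then for every `p̂ ∈ B` and `w` in the normal cone of `B` at `p̂`:
`⟨p̂ − p', f(p̂) − w⟩ ≤ −⟨p̂ − p', S (p̂ − p')⟩` with `f(p̂) = ∑ c i − S p̂ − x*`. -/
theorem statement_8 (n N : ℕ) (hn : 0 < n) (hN : 0 < N)
    (Q : Fin N → Matrix (Fin n) (Fin n) ℝ) (hQ : ∀ i, (Q i).PosDef)
    (c : Fin N → EuclideanSpace ℝ (Fin n))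
    (S : Matrix (Fin n) (Fin n) ℝ) (hS : S = ∑ i, (Q i)⁻¹)
    (p0 : EuclideanSpace ℝ (Fin n)) (δbar : ℝ) (hδ : 0 < δbar)
    (B : Set (EuclideanSpace ℝ (Fin n))) (hB : B = Metric.closedBall p0 δbar)
    (xstar : EuclideanSpace ℝ (Fin n))
    (f : EuclideanSpace ℝ (Fin n) → EuclideanSpace ℝ (Fin n))
    (hf : ∀ phat, f phat = (∑ i, c i) - mvec S phat - xstar)
    (p' : EuclideanSpace ℝ (Fin n)) (hp' : p' ∈ B)
    (hVI : ∀ s ∈ B, 0 ≤ ⟪(∑ i, (c i - mvec (Q i)⁻¹ p')) - xstar, p' - s⟫)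
    (phat : EuclideanSpace ℝ (Fin n)) (hphat : phat ∈ B)
    (w : EuclideanSpace ℝ (Fin n)) (hw : ∀ s ∈ B, ⟪w, s - phat⟫ ≤ 0) :
    ⟪phat - p', f phat - w⟫ ≤ -⟪phat - p', mvec S (phat - p')⟫ :=
  statement_8_general n N Q c S hS B xstar f hf p' hp' hVI phat hphat w hw
end
end

section
/- Let σ > 0, τ > 0, ε > 0, and k₀ ≥ √n λ_max(S)/λ_min(S)². Let p* ∈ B, p̂ ∈ ℝ^n, and set p̃ := p̂ − p*. Let K be a real n×n matrix, set Φ := K + S⁻¹, and let v ∈ ℝ^n. Then ⟨p̃, −S p̃ + Φ v + ε⁻¹ (P_B(p̂) − p̂)⟩ − Tr((S p̃ vᵀ + σ_s(‖K‖_F) K)ᵀ S⁻¹ Φ) ≤ −p̃ᵀ S p̃. -/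
/-!
The coupling term `Tr((S p̃ vᵀ)ᵀ S⁻¹ Φ)` equals `⟨p̃, Φ v⟩` and cancels, and
`⟨p̃, P_B(p̂) − p̂⟩ ≤ 0` is the variational inequality of the projection onto the convex set
`B ∋ p*`. What remains is the nudge term `σ_s(‖K‖_F) Tr(Kᵀ S⁻¹ (K + S⁻¹))`, which must be
nonnegative. It vanishes below the threshold `k₀`; above it, in an eigenbasis of `S`, the quadratic
part `Tr(Kᵀ S⁻¹ K) ≥ ‖K‖_F² / λ_max` dominates the linear part
`|Tr(Kᵀ S⁻²)| ≤ √n ‖K‖_F / λ_min²`, precisely because `‖K‖_F ≥ k₀ ≥ √n λ_max / λ_min²`.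
-/

open scoped RealInnerProductSpace
open Matrix

noncomputable section

/-- The saturation function `σ_s` of the adaptive nudge mechanism. -/
def sigs (σ k0 u : ℝ) : ℝ :=
  if u < k0 then 0 else if u ≤ 2 * k0 then σ * (u / k0 - 1) else σ

/-- The Frobenius norm `‖M‖_F = √(Tr (Mᵀ M))` of a real matrix. -/
def frob {n : ℕ} (M : Matrix (Fin n) (Fin n) ℝ) : ℝ :=
  Real.sqrt ((Mᵀ * M).trace)

theorem ofLp_mvec {n : ℕ} (M : Matrix (Fin n) (Fin n) ℝ) (x : EuclideanSpace ℝ (Fin n)) :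
    (mvec M x).ofLp = M *ᵥ x.ofLp :=
  rfl

theorem inner_mvec_right {n : ℕ} (M : Matrix (Fin n) (Fin n) ℝ)
    (x y : EuclideanSpace ℝ (Fin n)) : ⟪x, mvec M y⟫ = x.ofLp ⬝ᵥ (M *ᵥ y.ofLp) := by
  rw [EuclideanSpace.inner_eq_star_dotProduct, star_trivial, dotProduct_comm, ofLp_mvec]

theorem sigs_mul_nonneg {σ k0 u T : ℝ} (hσ : 0 ≤ σ) (hk0 : 0 < k0) (hT : k0 ≤ u → 0 ≤ T) :
    0 ≤ sigs σ k0 u * T := by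
  unfold sigs
  split_ifs with hlow hmid
  · simp
  · have hu : 1 ≤ u / k0 := (one_le_div hk0).2 (not_lt.1 hlow)
    exact mul_nonneg (mul_nonneg hσ (by linarith)) (hT (not_lt.1 hlow))
  · exact mul_nonneg hσ (hT (not_lt.1 hlow))

theorem real_inner_sub_nearest_sub_self_nonpos {E : Type*} [NormedAddCommGroup E]
    [InnerProductSpace ℝ E] {C : Set E} (hC : Convex ℝ C) {x m q : E} (hm : m ∈ C)
    (hq : q ∈ C) (hmin : ∀ y ∈ C, ‖x - m‖ ≤ ‖x - y‖) : ⟪x - q, m - x⟫ ≤ 0 := by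
  have : Nonempty C := ⟨⟨m, hm⟩⟩
  have hinf : ‖x - m‖ = ⨅ y : C, ‖x - y‖ :=
    le_antisymm (le_ciInf fun y => hmin y y.2)
      (ciInf_le ⟨0, by rintro _ ⟨y, rfl⟩; positivity⟩ (⟨m, hm⟩ : C))
  have hvar : ⟪x - m, q - m⟫ ≤ 0 := (norm_eq_iInf_iff_real_inner_le_zero hC hm).1 hinf q hq
  have hsplit : ⟪x - q, m - x⟫ = -‖x - m‖ ^ 2 + ⟪x - m, q - m⟫ := by
    rw [← real_inner_self_eq_norm_sq, show x - q = (x - m) - (q - m) by abel,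
      show m - x = -(x - m) by abel, inner_neg_right, inner_sub_left, real_inner_comm (q - m)]
    ring
  nlinarith [sq_nonneg ‖x - m‖]

namespace Matrix

variable {ι : Type*} [Fintype ι]

theorem trace_conjStarAlgAut {R : Type*} [DecidableEq ι] [CommRing R] [StarRing R]
    (u : unitary (Matrix ι ι R)) (X : Matrix ι ι R) :
    (Unitary.conjStarAlgAut R _ u X).trace = X.trace := by
  rw [Unitary.conjStarAlgAut_apply, trace_mul_cycle, Unitary.coe_star_mul_self, one_mul]

theorem trace_transpose_vecMulVec_mulVec_mul_inv_mul [DecidableEq ι] {S : Matrix ι ι ℝ}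
    (hS : S.IsHermitian) (hdet : IsUnit S.det) (p v : ι → ℝ) (Φ : Matrix ι ι ℝ) :
    ((vecMulVec (S *ᵥ p) v)ᵀ * S⁻¹ * Φ).trace = p ⬝ᵥ (Φ *ᵥ v) := by
  have hST : Sᵀ = S := by rw [← conjTranspose_eq_transpose_of_trivial, hS.eq]
  have hSp : (S *ᵥ p) ᵥ* S⁻¹ = p := by
    rw [← vecMul_transpose, hST, vecMul_vecMul, mul_nonsing_inv S hdet, vecMul_one]
  rw [transpose_vecMulVec, vecMulVec_mul, hSp, vecMulVec_mul, trace_vecMulVec, dotProduct_comm,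
    dotProduct_mulVec]

theorem trace_transpose_mul_self_eq_sum_sq (H : Matrix ι ι ℝ) :
    (Hᵀ * H).trace = ∑ i, ∑ j, H i j ^ 2 := by
  simp only [trace, diag, mul_apply, transpose_apply, sq]
  exact Finset.sum_comm

theorem sum_abs_diag_le_sqrt_card_mul_sqrt_trace (H : Matrix ι ι ℝ) :
    ∑ i, |H i i| ≤ √(Fintype.card ι) * √(Hᵀ * H).trace := by
  have hdiag : ∑ i, H i i ^ 2 ≤ (Hᵀ * H).trace := by
    rw [trace_transpose_mul_self_eq_sum_sq]
    exact Finset.sum_le_sum fun i _ =>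
      Finset.single_le_sum (f := fun j => H i j ^ 2) (fun j _ => sq_nonneg _) (Finset.mem_univ i)
  have hCS : (∑ i, |H i i|) ^ 2 ≤ Fintype.card ι * ∑ i, H i i ^ 2 := by
    simpa using sq_sum_le_card_mul_sum_sq (s := Finset.univ) (f := fun i => |H i i|)
  rw [← Real.sqrt_mul (Nat.cast_nonneg _)]
  refine Real.le_sqrt_of_sq_le (hCS.trans ?_)
  gcongr

variable [DecidableEq ι]

theorem mul_trace_le_trace_transpose_mul_diagonal_mul {H : Matrix ι ι ℝ} {d : ι → ℝ} {a : ℝ}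
    (had : ∀ i, a ≤ d i) : a * (Hᵀ * H).trace ≤ (Hᵀ * diagonal d * H).trace := by
  have h : (Hᵀ * diagonal d * H).trace = ∑ i, d i * ∑ j, H i j ^ 2 := by
    simp only [trace, diag, mul_apply, transpose_apply, diagonal_apply, sq, Finset.mul_sum,
      mul_ite, mul_zero, Finset.sum_ite_eq', Finset.mem_univ, if_true]
    rw [Finset.sum_comm]
    refine Finset.sum_congr rfl fun i _ => Finset.sum_congr rfl fun j _ => by ring
  rw [trace_transpose_mul_self_eq_sum_sq, h, Finset.mul_sum]
  exact Finset.sum_le_sum fun i _ =>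
    mul_le_mul_of_nonneg_right (had i) (Finset.sum_nonneg fun j _ => sq_nonneg _)

theorem neg_le_trace_transpose_mul_diagonal {H : Matrix ι ι ℝ} {d : ι → ℝ} {b : ℝ}
    (hb : 0 ≤ b) (hdb : ∀ i, |d i| ≤ b) :
    -(b * (√(Fintype.card ι) * √(Hᵀ * H).trace)) ≤ (Hᵀ * diagonal d).trace := by
  have h : (Hᵀ * diagonal d).trace = ∑ i, d i * H i i := by
    simp [trace, mul_apply, diagonal_apply, mul_comm]
  have hterm : ∀ i, -(b * |H i i|) ≤ d i * H i i := fun i =>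
    calc -(b * |H i i|) ≤ -(|d i| * |H i i|) := by gcongr; exact hdb i
      _ = -|d i * H i i| := by rw [abs_mul]
      _ ≤ d i * H i i := neg_abs_le _
  calc -(b * (√(Fintype.card ι) * √(Hᵀ * H).trace)) ≤ -(b * ∑ i, |H i i|) := by
        gcongr; exact sum_abs_diag_le_sqrt_card_mul_sqrt_trace H
    _ = ∑ i, -(b * |H i i|) := by rw [Finset.mul_sum, Finset.sum_neg_distrib]
    _ ≤ (Hᵀ * diagonal d).trace := h ▸ Finset.sum_le_sum fun i _ => hterm i

theorem trace_transpose_mul_diagonal_mul_add_diagonal_nonneg {H : Matrix ι ι ℝ} {d : ι → ℝ}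
    {a b : ℝ} (had : ∀ i, a ≤ d i) (hb : 0 ≤ b) (hdb : ∀ i, |d i| ≤ b)
    (hH : √(Fintype.card ι) * b ^ 2 ≤ a * √(Hᵀ * H).trace) :
    0 ≤ (Hᵀ * diagonal d * (H + diagonal d)).trace := by
  have hquad := mul_trace_le_trace_transpose_mul_diagonal_mul (H := H) had
  have hlin := neg_le_trace_transpose_mul_diagonal (H := H) (d := fun i => d i * d i)
    (mul_nonneg hb hb) fun i => by rw [abs_mul]; exact mul_le_mul (hdb i) (hdb i) (abs_nonneg _) hb
  have hsq : (Hᵀ * H).trace = √(Hᵀ * H).trace ^ 2 :=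
    (Real.sq_sqrt (trace_transpose_mul_self_eq_sum_sq H ▸ by positivity)).symm
  rw [hsq] at hquad
  rw [mul_add, trace_add, Matrix.mul_assoc Hᵀ (diagonal d) (diagonal d), diagonal_mul_diagonal]
  nlinarith [mul_nonneg (Real.sqrt_nonneg (Hᵀ * H).trace) (sub_nonneg.2 hH)]

theorem PosDef.iInf_eigenvalues_pos [Nonempty ι] {S : Matrix ι ι ℝ} (hS : S.PosDef)
    (hH : S.IsHermitian) : 0 < ⨅ i, hH.eigenvalues i := by
  obtain ⟨j, hj⟩ := exists_eq_ciInf_of_finite (f := hH.eigenvalues)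
  exact hj ▸ hS.eigenvalues_pos j

theorem PosDef.trace_transpose_mul_inv_mul_add_inv_nonneg [Nonempty ι] {S K : Matrix ι ι ℝ}
    (hS : S.PosDef) {lmin lmax : ℝ} (hlmin : 0 < lmin)
    (hmin : ∀ i, lmin ≤ hS.isHermitian.eigenvalues i)
    (hmax : ∀ i, hS.isHermitian.eigenvalues i ≤ lmax)
    (hK : √(Fintype.card ι) * lmax / lmin ^ 2 ≤ √(Kᵀ * K).trace) :
    0 ≤ (Kᵀ * S⁻¹ * (K + S⁻¹)).trace := by
  set e := hS.isHermitian.eigenvalues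
  set φ := Unitary.conjStarAlgAut ℝ (Matrix ι ι ℝ) hS.isHermitian.eigenvectorUnitary
  have he : ∀ i, 0 < e i := hS.eigenvalues_pos
  have hlmax : 0 < lmax := (he (Classical.arbitrary ι)).trans_le (hmax _)
  have hS_eq : S = φ (diagonal e) := by
    have := hS.isHermitian.spectral_theorem
    rwa [RCLike.ofReal_real_eq_id, Function.id_comp] at this
  have hSinv : S⁻¹ = φ (diagonal e⁻¹) := by
    refine inv_eq_right_inv ?_
    rw [hS_eq, ← map_mul, diagonal_mul_diagonal]
    simp [(he _).ne']
  have hT : ∀ X : Matrix ι ι ℝ, Xᵀ = star X := fun X => by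
    rw [star_eq_conjTranspose, conjTranspose_eq_transpose_of_trivial]
  set H := φ.symm K
  have hKH : K = φ H := by simp [H]
  have htrace : (Kᵀ * S⁻¹ * (K + S⁻¹)).trace
      = (Hᵀ * diagonal e⁻¹ * (H + diagonal e⁻¹)).trace := by
    rw [hKH, hSinv, hT, hT, ← map_star, ← map_add, ← map_mul, ← map_mul, trace_conjStarAlgAut]
  have hnorm : (Kᵀ * K).trace = (Hᵀ * H).trace := by
    rw [hKH, hT, hT, ← map_star, ← map_mul, trace_conjStarAlgAut]
  rw [htrace]
  refine trace_transpose_mul_diagonal_mul_add_diagonal_nonneg (a := lmax⁻¹) (b := lmin⁻¹)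
    (fun i => inv_anti₀ (he i) (hmax i)) (inv_nonneg.2 hlmin.le)
    (fun i => by rw [Pi.inv_apply, abs_of_pos (inv_pos.2 (he i))]; exact inv_anti₀ hlmin (hmin i))
    ?_
  rw [← hnorm, inv_pow, ← div_eq_mul_inv, inv_mul_eq_div,
    div_le_div_iff₀ (by positivity) hlmax]
  rwa [div_le_iff₀ (by positivity)] at hK

end Matrix

theorem statement_14_general (n N : ℕ) (hn : 0 < n) (hN : 0 < N)
    (Q : Fin N → Matrix (Fin n) (Fin n) ℝ) (hQ : ∀ i, (Q i).PosDef)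
    (S : Matrix (Fin n) (Fin n) ℝ) (hS : S = ∑ i, (Q i)⁻¹) (hSH : S.IsHermitian)
    (p0 : EuclideanSpace ℝ (Fin n)) (δbar : ℝ)
    (B : Set (EuclideanSpace ℝ (Fin n))) (hB : B = Metric.closedBall p0 δbar)
    (P : EuclideanSpace ℝ (Fin n) → EuclideanSpace ℝ (Fin n))
    (hP : ∀ x, P x ∈ B ∧ ∀ y ∈ B, ‖x - P x‖ ≤ ‖x - y‖)
    (σ ε k0 : ℝ) (hσ : 0 < σ) (hε : 0 < ε)
    (lammax lammin : ℝ)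
    (hmax : lammax = ⨆ i, hSH.eigenvalues i)
    (hmin : lammin = ⨅ i, hSH.eigenvalues i)
    (hk0 : Real.sqrt n * lammax / lammin ^ 2 ≤ k0)
    (pstar : EuclideanSpace ℝ (Fin n)) (hpstar : pstar ∈ B)
    (phat : EuclideanSpace ℝ (Fin n))
    (ptil : EuclideanSpace ℝ (Fin n)) (hptil : ptil = phat - pstar)
    (K Φ : Matrix (Fin n) (Fin n) ℝ) (hΦ : Φ = K + S⁻¹)
    (v : EuclideanSpace ℝ (Fin n)) :
    ⟪ptil, -mvec S ptil + mvec Φ v + ε⁻¹ • (P phat - phat)⟫ -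
        ((Matrix.vecMulVec (mvec S ptil) v + sigs σ k0 (frob K) • K)ᵀ * S⁻¹ * Φ).trace ≤
      -⟪ptil, mvec S ptil⟫ := by
  have : Nonempty (Fin n) := Fin.pos_iff_nonempty.1 hn
  have hSpd : S.PosDef := hS ▸ posDef_sum ⟨⟨0, hN⟩, Finset.mem_univ _⟩ fun i _ => (hQ i).inv
  have hle_max : ∀ i, hSH.eigenvalues i ≤ lammax :=
    hmax ▸ le_ciSup (Set.finite_range _).bddAbove
  have hmin_le : ∀ i, lammin ≤ hSH.eigenvalues i :=
    hmin ▸ ciInf_le (Set.finite_range _).bddBelow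
  have hlammin : 0 < lammin := hmin ▸ hSpd.iInf_eigenvalues_pos hSH
  have hlammax : 0 < lammax := hlammin.trans_le ((hmin_le ⟨0, hn⟩).trans (hle_max _))
  have hk0pos : 0 < k0 := lt_of_lt_of_le
    (div_pos (mul_pos (Real.sqrt_pos.2 (Nat.cast_pos.2 hn)) hlammax) (pow_pos hlammin 2)) hk0
  have hcoupling : ((vecMulVec (mvec S ptil) v)ᵀ * S⁻¹ * Φ).trace = ⟪ptil, mvec Φ v⟫ := by
    rw [ofLp_mvec, inner_mvec_right, trace_transpose_vecMulVec_mulVec_mul_inv_mul hSH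
      ((isUnit_iff_isUnit_det S).1 hSpd.isUnit)]
  have hproj : ⟪ptil, P phat - phat⟫ ≤ 0 := hptil ▸
    real_inner_sub_nearest_sub_self_nonpos (hB ▸ convex_closedBall p0 δbar) (hP phat).1 hpstar
      (hP phat).2
  have hdamp : 0 ≤ sigs σ k0 (frob K) * (Kᵀ * S⁻¹ * Φ).trace :=
    sigs_mul_nonneg hσ.le hk0pos fun hK => hΦ ▸
      hSpd.trace_transpose_mul_inv_mul_add_inv_nonneg hlammin hmin_le hle_max
        (by simpa [frob] using hk0.trans hK)
  rw [transpose_add, add_mul, add_mul, trace_add, transpose_smul, smul_mul, smul_mul, trace_smul,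
    hcoupling, inner_add_right, inner_add_right, inner_neg_right, real_inner_smul_right,
    smul_eq_mul]
  nlinarith [mul_nonpos_of_nonneg_of_nonpos (inv_nonneg.2 hε.le) hproj]

/-- Lyapunov decrease along the adaptive nudge dynamics (full-trust phase):
with `p̃ = p̂ − p*`, `Φ = K + S⁻¹`, and `k₀ ≥ √n λ_max(S)/λ_min(S)²`,
`⟨p̃, −S p̃ + Φ v + ε⁻¹(P_B(p̂) − p̂)⟩ − Tr((S p̃ vᵀ + σ_s(‖K‖_F) K)ᵀ S⁻¹ Φ)
  ≤ −p̃ᵀ S p̃`. -/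
theorem statement_14 (n N : ℕ) (hn : 0 < n) (hN : 0 < N)
    (Q : Fin N → Matrix (Fin n) (Fin n) ℝ) (hQ : ∀ i, (Q i).PosDef)
    (S : Matrix (Fin n) (Fin n) ℝ) (hS : S = ∑ i, (Q i)⁻¹) (hSH : S.IsHermitian)
    (p0 : EuclideanSpace ℝ (Fin n)) (δbar : ℝ) (hδ : 0 < δbar)
    (B : Set (EuclideanSpace ℝ (Fin n))) (hB : B = Metric.closedBall p0 δbar)
    (P : EuclideanSpace ℝ (Fin n) → EuclideanSpace ℝ (Fin n))
    (hP : ∀ x, P x ∈ B ∧ ∀ y ∈ B, ‖x - P x‖ ≤ ‖x - y‖)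
    (σ τ ε k0 : ℝ) (hσ : 0 < σ) (hτ : 0 < τ) (hε : 0 < ε)
    (lammax lammin : ℝ)
    (hmax : lammax = ⨆ i, hSH.eigenvalues i)
    (hmin : lammin = ⨅ i, hSH.eigenvalues i)
    (hk0 : Real.sqrt n * lammax / lammin ^ 2 ≤ k0)
    (pstar : EuclideanSpace ℝ (Fin n)) (hpstar : pstar ∈ B)
    (phat : EuclideanSpace ℝ (Fin n))
    (ptil : EuclideanSpace ℝ (Fin n)) (hptil : ptil = phat - pstar)
    (K Φ : Matrix (Fin n) (Fin n) ℝ) (hΦ : Φ = K + S⁻¹)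
    (v : EuclideanSpace ℝ (Fin n)) :
    ⟪ptil, -mvec S ptil + mvec Φ v + ε⁻¹ • (P phat - phat)⟫ -
        ((Matrix.vecMulVec (mvec S ptil) v + sigs σ k0 (frob K) • K)ᵀ * S⁻¹ * Φ).trace ≤
      -⟪ptil, mvec S ptil⟫ :=
  statement_14_general n N hn hN Q hQ S hS hSH p0 δbar B hB P hP σ ε k0 hσ hε lammax lammin hmax
    hmin hk0 pstar hpstar phat ptil hptil K Φ hΦ v

end
end

section
/- Let θ > 0, ν̄ > 0, τ > 0, k₀ > 0, let ε satisfy 0 < ε ≤ θ⁻¹(1 + λ_max(S))⁻¹, and let σ ≥ 2θ(1 + λ_max(S)). Let p̂ ∈ ℝ^n, set d := p̂ − P_B(p̂), let γ_1,…,γ_N ∈ [0,1], let K be a real n×n matrix, and let v, ν ∈ ℝ^n with ‖v‖ ≤ θ and ‖ν‖ ≤ ν̄. Define H := ⟨d, −(ε⁻¹ I + Σ_{i=1}^N γ_i Q_i⁻¹) d + K v + ν⟩ + (1/τ) Tr(Lᵀ K), where L := τ (−Σ_{i=1}^N γ_i Q_i⁻¹ d + ν) vᵀ − τ σ_s(‖K‖_F)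 K. Then H ≤ −(1/(2ε)) ‖d‖² − (σ/4) ‖K‖_F² + ν̄ ‖d‖ + ν̄ θ ‖K‖_F + (σ/2) k₀². -/
/-!
Write `A = ∑ γᵢ Qᵢ⁻¹` and `w = K v`. Expanding the trace,
`H = -ε⁻¹‖d‖² - ⟪A d, d⟫ + ⟪d - A d, w⟫ + ⟪d, ν⟫ + ⟪ν, w⟫ - σ_s(‖K‖_F) ‖K‖_F²`.
Since `0 ≤ A ≤ S ≤ λ_max`, Cauchy–Schwarz for the semi-inner product `⟪A ·, ·⟫` gives
`|⟪A d, w⟫| ≤ λ_max ‖d‖ ‖w‖`, and `‖w‖ ≤ θ ‖K‖_F`, so the cross term is at most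
`θ (1 + λ_max) ‖d‖ ‖K‖_F`. The conditions on `ε` and `σ` are exactly what AM–GM needs to absorb it
into `‖d‖² / (2ε) + (σ/4) ‖K‖_F²`, and the saturation satisfies
`(σ/2 - σ_s(u)) u² ≤ (σ/2) k₀²` for every `u ≥ 0`.
-/

open scoped RealInnerProductSpace
open Matrix

noncomputable section

namespace LinearMap.IsPositive

variable {E : Type*} [NormedAddCommGroup E] [InnerProductSpace ℝ E] {T : E →ₗ[ℝ] E}

theorem inner_map_sq_le (hT : T.IsPositive) (x y : E) :
    ⟪T x, y⟫ ^ 2 ≤ ⟪T x, x⟫ * ⟪T y, y⟫ := by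
  have hsymm : ⟪T y, x⟫ = ⟪T x, y⟫ := by rw [hT.isSymmetric y x, real_inner_comm]
  have hquad (t : ℝ) : 0 ≤ ⟪T y, y⟫ * (t * t) + 2 * ⟪T x, y⟫ * t + ⟪T x, x⟫ := by
    have := hT.inner_nonneg_left (x + t • y)
    simp only [map_add, map_smul, inner_add_left, inner_add_right, real_inner_smul_left,
      real_inner_smul_right, hsymm] at this
    linarith
  have := discrim_le_zero hquad
  rw [discrim] at this
  linarith

theorem abs_inner_map_le (hT : T.IsPositive) {c : ℝ} (hc : ∀ x, ⟪T x, x⟫ ≤ c * ‖x‖ ^ 2)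
    (x y : E) : |⟪T x, y⟫| ≤ c * ‖x‖ * ‖y‖ := by
  rcases eq_or_ne x 0 with rfl | hx
  · simp
  have hc0 : 0 ≤ c :=
    nonneg_of_mul_nonneg_left ((hT.inner_nonneg_left x).trans (hc x)) (by positivity)
  refine abs_le_of_sq_le_sq ?_ (by positivity)
  calc ⟪T x, y⟫ ^ 2 ≤ ⟪T x, x⟫ * ⟪T y, y⟫ := hT.inner_map_sq_le x y
    _ ≤ (c * ‖x‖ ^ 2) * (c * ‖y‖ ^ 2) :=
      mul_le_mul (hc x) (hc y) (hT.inner_nonneg_left y) (by positivity)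
    _ = (c * ‖x‖ * ‖y‖) ^ 2 := by ring

theorem inner_sub_map_le (hT : T.IsPositive) {c : ℝ} (hc : ∀ x, ⟪T x, x⟫ ≤ c * ‖x‖ ^ 2)
    (x y : E) : ⟪x - T x, y⟫ ≤ (1 + c) * ‖x‖ * ‖y‖ := by
  rw [inner_sub_left]
  linarith [real_inner_le_norm x y, neg_abs_le ⟪T x, y⟫, hT.abs_inner_map_le hc x y]

end LinearMap.IsPositive

namespace Matrix

theorem posSemidef_sum_smul {ι κ : Type*} [Fintype κ] {P : κ → Matrix ι ι ℝ}
    (hP : ∀ k, (P k).PosSemidef) {γ : κ → ℝ} (hγ : ∀ k, 0 ≤ γ k) :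
    (∑ k, γ k • P k).PosSemidef :=
  posSemidef_sum _ fun k _ => (hP k).smul (hγ k)

theorem posSemidef_sum_sub_sum_smul {ι κ : Type*} [Fintype κ] {P : κ → Matrix ι ι ℝ}
    (hP : ∀ k, (P k).PosSemidef) {γ : κ → ℝ} (hγ : ∀ k, γ k ≤ 1) :
    (∑ k, P k - ∑ k, γ k • P k).PosSemidef := by
  simpa [sub_smul, Finset.sum_sub_distrib] using
    posSemidef_sum_smul hP (γ := fun k => 1 - γ k) fun k => sub_nonneg.2 (hγ k)

variable {ι : Type*} [Fintype ι] [DecidableEq ι]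

theorem IsHermitian.inner_toEuclideanLin_self_le {S : Matrix ι ι ℝ} (hS : S.IsHermitian) {c : ℝ}
    (hc : ∀ i, hS.eigenvalues i ≤ c) (x : EuclideanSpace ℝ ι) :
    ⟪toEuclideanLin S x, x⟫ ≤ c * ‖x‖ ^ 2 := by
  set b := hS.eigenvectorBasis
  have hb (i : ι) : ⟪toEuclideanLin S x, b i⟫ = hS.eigenvalues i * ⟪x, b i⟫ := by
    have hvec : toEuclideanLin S (b i) = hS.eigenvalues i • b i := by
      ext j
      simpa using congrFun (hS.mulVec_eigenvectorBasis i) j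
    rw [isSymmetric_toEuclideanLin_iff.mpr hS x (b i), hvec, real_inner_smul_right]
  calc ⟪toEuclideanLin S x, x⟫ = ∑ i, hS.eigenvalues i * ⟪x, b i⟫ ^ 2 := by
        rw [← b.sum_inner_mul_inner]
        simp only [hb, real_inner_comm x, sq, mul_assoc]
    _ ≤ ∑ i, c * ⟪x, b i⟫ ^ 2 := by gcongr with i; exact hc i
    _ = c * ‖x‖ ^ 2 := by rw [← Finset.mul_sum, b.sum_sq_inner_left]

theorem PosSemidef.inner_toEuclideanLin_le {A B : Matrix ι ι ℝ} (h : (B - A).PosSemidef)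
    (x : EuclideanSpace ℝ ι) : ⟪toEuclideanLin A x, x⟫ ≤ ⟪toEuclideanLin B x, x⟫ := by
  have := (isPositive_toEuclideanLin_iff.mpr h).inner_nonneg_left x
  rwa [map_sub, LinearMap.sub_apply, inner_sub_left, sub_nonneg] at this

end Matrix

variable {n : ℕ}

lemma trace_vecMulVec_transpose_mul (w v : EuclideanSpace ℝ (Fin n))
    (K : Matrix (Fin n) (Fin n) ℝ) : ((vecMulVec w v)ᵀ * K).trace = ⟪w, mvec K v⟫ := by
  simp only [trace, diag, mul_apply, transpose_apply, vecMulVec_apply, PiLp.inner_apply, mvec,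
    toLpLin_apply, mulVec, dotProduct, RCLike.inner_apply, conj_trivial, Finset.sum_mul]
  rw [Finset.sum_comm]
  exact Finset.sum_congr rfl fun _ _ => Finset.sum_congr rfl fun _ _ => by ring

lemma frob_nonneg (K : Matrix (Fin n) (Fin n) ℝ) : 0 ≤ frob K :=
  Real.sqrt_nonneg _

lemma frob_sq (K : Matrix (Fin n) (Fin n) ℝ) : frob K ^ 2 = (Kᵀ * K).trace :=
  Real.sq_sqrt <| by
    simpa using (posSemidef_conjTranspose_mul_self K).trace_nonneg

section Frobenius

attribute [local instance] Matrix.frobeniusNormedAddCommGroup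

lemma frob_eq_frobenius_norm (K : Matrix (Fin n) (Fin n) ℝ) : frob K = ‖K‖ := by
  rw [frob, frobenius_norm_def, ← Real.sqrt_eq_rpow, trace, Finset.sum_comm]
  simp [mul_apply, sq]

lemma norm_mvec_le (K : Matrix (Fin n) (Fin n) ℝ) (v : EuclideanSpace ℝ (Fin n)) :
    ‖mvec K v‖ ≤ frob K * ‖v‖ := by
  have := frobenius_norm_mul K (replicateCol Unit v.ofLp)
  rwa [← replicateCol_mulVec, frobenius_norm_replicateCol, frobenius_norm_replicateCol,
    ← frob_eq_frobenius_norm] at this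

end Frobenius

lemma inner_add_trace_transpose_mul_eq {ε τ s : ℝ} (hτ : τ ≠ 0) (A K : Matrix (Fin n) (Fin n) ℝ)
    (d v ν : EuclideanSpace ℝ (Fin n)) :
    ⟪d, -mvec (ε⁻¹ • (1 : Matrix (Fin n) (Fin n) ℝ) + A) d + mvec K v + ν⟫ +
        (1 / τ) * ((τ • vecMulVec (-mvec A d + ν) v - (τ * s) • K)ᵀ * K).trace =
      -ε⁻¹ * ‖d‖ ^ 2 - ⟪mvec A d, d⟫ + ⟪d - mvec A d, mvec K v⟫ + ⟪d, ν⟫ + ⟪ν, mvec K v⟫ -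
        s * frob K ^ 2 := by
  have hmvec : mvec (ε⁻¹ • (1 : Matrix (Fin n) (Fin n) ℝ) + A) d = ε⁻¹ • d + mvec A d := by
    simp [mvec]
  rw [hmvec, transpose_sub, transpose_smul, transpose_smul, sub_mul, smul_mul, smul_mul,
    trace_sub, trace_smul, trace_smul, trace_vecMulVec_transpose_mul, ← frob_sq]
  simp only [inner_add_left, inner_add_right, inner_neg_left, inner_neg_right, inner_sub_left,
    real_inner_smul_right, real_inner_self_eq_norm_sq, real_inner_comm d, smul_eq_mul]
  field_simp
  ring

lemma sub_sigs_mul_sq_le {σ k0 b : ℝ} (hσ : 0 ≤ σ) (hk0 : 0 < k0) (hb : 0 ≤ b) :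
    (σ / 2 - sigs σ k0 b) * b ^ 2 ≤ σ / 2 * k0 ^ 2 := by
  unfold sigs
  split_ifs with hlow hmid
  · nlinarith [mul_le_mul_of_nonneg_left (pow_le_pow_left₀ hb hlow.le 2) hσ]
  · -- with `t = b / k0 ∈ [1, 2]` this is `(t - 1)² (t + 1/2) ≥ 0`
    rw [div_sub_one hk0.ne', mul_div_assoc', sub_div' hk0.ne', div_mul_eq_mul_div,
      div_le_iff₀ hk0]
    nlinarith [mul_nonneg hσ (mul_nonneg (sq_nonneg (b - k0)) (by linarith : 0 ≤ 2 * b + k0))]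
  · nlinarith [mul_nonneg hσ (sq_nonneg b), mul_nonneg hσ (sq_nonneg k0)]

lemma mul_mul_le_sq_div_add {ε c a b : ℝ} (hε : 0 < ε) (hc : 0 ≤ c) (hεc : ε * c ≤ 1) :
    c * a * b ≤ a ^ 2 / (2 * ε) + c / 2 * b ^ 2 := by
  rw [div_add' _ _ _ (by positivity), le_div_iff₀ (by positivity)]
  nlinarith [sq_nonneg (a - ε * c * b), mul_nonneg (mul_nonneg hε.le hc) (sq_nonneg b),
    mul_nonneg (mul_nonneg (mul_nonneg hε.le hc) (sq_nonneg b)) (sub_nonneg.2 hεc)]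

lemma neg_inv_mul_sq_add_sub_sigs_le {ε c σ k0 a b : ℝ} (hε : 0 < ε) (hc : 0 ≤ c)
    (hεc : ε * c ≤ 1) (hσ : 2 * c ≤ σ) (hk0 : 0 < k0) (hb : 0 ≤ b) :
    -ε⁻¹ * a ^ 2 + c * a * b - sigs σ k0 b * b ^ 2 ≤
      -(1 / (2 * ε)) * a ^ 2 - σ / 4 * b ^ 2 + σ / 2 * k0 ^ 2 := by
  have hamgm := mul_mul_le_sq_div_add (a := a) (b := b) hε hc hεc
  have hsat := sub_sigs_mul_sq_le (σ := σ) (by linarith) hk0 hb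
  have hinv : ε⁻¹ * a ^ 2 = 2 * (a ^ 2 / (2 * ε)) := by field_simp
  have hhalf : 1 / (2 * ε) * a ^ 2 = a ^ 2 / (2 * ε) := by ring
  linarith [mul_le_mul_of_nonneg_right hσ (sq_nonneg b)]

theorem statement_15_general (n N : ℕ) (hn : 0 < n)
    (Q : Fin N → Matrix (Fin n) (Fin n) ℝ) (hQ : ∀ i, (Q i).PosDef)
    (S : Matrix (Fin n) (Fin n) ℝ) (hS : S = ∑ i, (Q i)⁻¹) (hSH : S.IsHermitian)
    (θ νbar τ k0 ε σ : ℝ) (hθ : 0 < θ) (hτ : 0 < τ)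
    (hk0 : 0 < k0)
    (lammax : ℝ) (hmax : lammax = ⨆ i, hSH.eigenvalues i)
    (hε : 0 < ε) (hε' : ε ≤ θ⁻¹ * (1 + lammax)⁻¹)
    (hσ : 2 * θ * (1 + lammax) ≤ σ)
    (d : EuclideanSpace ℝ (Fin n))
    (γ : Fin N → ℝ) (hγ : ∀ i, γ i ∈ Set.Icc (0 : ℝ) 1)
    (K : Matrix (Fin n) (Fin n) ℝ)
    (v ν : EuclideanSpace ℝ (Fin n)) (hv : ‖v‖ ≤ θ) (hν : ‖ν‖ ≤ νbar)
    (L : Matrix (Fin n) (Fin n) ℝ)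
    (hL : L = τ • Matrix.vecMulVec (-mvec (∑ i, γ i • (Q i)⁻¹) d + ν) v -
        (τ * sigs σ k0 (frob K)) • K)
    (H : ℝ)
    (hH : H = ⟪d, -mvec (ε⁻¹ • (1 : Matrix (Fin n) (Fin n) ℝ) + ∑ i, γ i • (Q i)⁻¹) d +
          mvec K v + ν⟫ + (1 / τ) * (Lᵀ * K).trace) :
    H ≤ -(1 / (2 * ε)) * ‖d‖ ^ 2 - (σ / 4) * frob K ^ 2 + νbar * ‖d‖ +
      νbar * θ * frob K + (σ / 2) * k0 ^ 2 := by
  set A := ∑ i, γ i • (Q i)⁻¹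
  have hQinv (i : Fin N) : ((Q i)⁻¹).PosSemidef := (hQ i).posSemidef.inv
  have hA : A.PosSemidef := posSemidef_sum_smul hQinv fun i => (hγ i).1
  have hSA : (S - A).PosSemidef := hS ▸ posSemidef_sum_sub_sum_smul hQinv fun i => (hγ i).2
  have hSpsd : S.PosSemidef := by simpa using hA.add hSA
  have hle_lammax (i : Fin n) : hSH.eigenvalues i ≤ lammax :=
    hmax ▸ le_ciSup (Set.finite_range _).bddAbove i
  have hlammax : 0 ≤ lammax := (hSpsd.eigenvalues_nonneg ⟨0, hn⟩).trans (hle_lammax _)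
  have hT := isPositive_toEuclideanLin_iff.mpr hA
  have hTS (x : EuclideanSpace ℝ (Fin n)) : ⟪mvec A x, x⟫ ≤ lammax * ‖x‖ ^ 2 :=
    (hSA.inner_toEuclideanLin_le x).trans (hSH.inner_toEuclideanLin_self_le hle_lammax x)
  have hw : ‖mvec K v‖ ≤ frob K * θ :=
    (norm_mvec_le K v).trans (mul_le_mul_of_nonneg_left hv (frob_nonneg K))
  have hcross : ⟪d - mvec A d, mvec K v⟫ ≤ (1 + lammax) * ‖d‖ * (frob K * θ) :=
    (hT.inner_sub_map_le hTS d (mvec K v)).trans (by gcongr)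
  have hdν : ⟪d, ν⟫ ≤ ‖d‖ * νbar :=
    (real_inner_le_norm d ν).trans (mul_le_mul_of_nonneg_left hν (norm_nonneg d))
  have hνw : ⟪ν, mvec K v⟫ ≤ νbar * (frob K * θ) :=
    (real_inner_le_norm _ _).trans (mul_le_mul hν hw (norm_nonneg _) ((norm_nonneg ν).trans hν))
  have hεc : ε * (θ * (1 + lammax)) ≤ 1 := by
    rwa [← mul_inv, ← one_div, le_div_iff₀ (by positivity)] at hε'
  have hscalar := neg_inv_mul_sq_add_sub_sigs_le (σ := σ) (a := ‖d‖) hε (by positivity) hεc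
    (by linarith) hk0 (frob_nonneg K)
  have hAd : 0 ≤ ⟪mvec A d, d⟫ := hT.inner_nonneg_left d
  rw [hH, hL, inner_add_trace_transpose_mul_eq hτ.ne']
  linarith

/-- The key dissipation inequality for the adaptive nudge mechanism:
with `d = p̂ − P_B(p̂)`, `γ_i ∈ [0,1]`, `‖v‖ ≤ θ`, `‖ν‖ ≤ ν̄`,
`0 < ε ≤ θ⁻¹(1 + λ_max(S))⁻¹` and `σ ≥ 2θ(1 + λ_max(S))`, the quantity
`H = ⟨d, −(ε⁻¹ I + ∑ γ_i (Q i)⁻¹) d + K v + ν⟩ + (1/τ) Tr(Lᵀ K)` with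
`L = τ (−∑ γ_i (Q i)⁻¹ d + ν) vᵀ − τ σ_s(‖K‖_F) K` satisfies
`H ≤ −(1/(2ε))‖d‖² − (σ/4)‖K‖_F² + ν̄‖d‖ + ν̄ θ ‖K‖_F + (σ/2) k₀²`. -/
theorem statement_15 (n N : ℕ) (hn : 0 < n) (hN : 0 < N)
    (Q : Fin N → Matrix (Fin n) (Fin n) ℝ) (hQ : ∀ i, (Q i).PosDef)
    (S : Matrix (Fin n) (Fin n) ℝ) (hS : S = ∑ i, (Q i)⁻¹) (hSH : S.IsHermitian)
    (p0 : EuclideanSpace ℝ (Fin n)) (δbar : ℝ) (hδ : 0 < δbar)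
    (B : Set (EuclideanSpace ℝ (Fin n))) (hB : B = Metric.closedBall p0 δbar)
    (P : EuclideanSpace ℝ (Fin n) → EuclideanSpace ℝ (Fin n))
    (hP : ∀ x, P x ∈ B ∧ ∀ y ∈ B, ‖x - P x‖ ≤ ‖x - y‖)
    (θ νbar τ k0 ε σ : ℝ) (hθ : 0 < θ) (hνbar : 0 < νbar) (hτ : 0 < τ)
    (hk0 : 0 < k0)
    (lammax : ℝ) (hmax : lammax = ⨆ i, hSH.eigenvalues i)
    (hε : 0 < ε) (hε' : ε ≤ θ⁻¹ * (1 + lammax)⁻¹)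
    (hσ : 2 * θ * (1 + lammax) ≤ σ)
    (phat : EuclideanSpace ℝ (Fin n))
    (d : EuclideanSpace ℝ (Fin n)) (hd : d = phat - P phat)
    (γ : Fin N → ℝ) (hγ : ∀ i, γ i ∈ Set.Icc (0 : ℝ) 1)
    (K : Matrix (Fin n) (Fin n) ℝ)
    (v ν : EuclideanSpace ℝ (Fin n)) (hv : ‖v‖ ≤ θ) (hν : ‖ν‖ ≤ νbar)
    (L : Matrix (Fin n) (Fin n) ℝ)
    (hL : L = τ • Matrix.vecMulVec (-mvec (∑ i, γ i • (Q i)⁻¹) d + ν) v -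
        (τ * sigs σ k0 (frob K)) • K)
    (H : ℝ)
    (hH : H = ⟪d, -mvec (ε⁻¹ • (1 : Matrix (Fin n) (Fin n) ℝ) + ∑ i, γ i • (Q i)⁻¹) d +
          mvec K v + ν⟫ + (1 / τ) * (Lᵀ * K).trace) :
    H ≤ -(1 / (2 * ε)) * ‖d‖ ^ 2 - (σ / 4) * frob K ^ 2 + νbar * ‖d‖ +
      νbar * θ * frob K + (σ / 2) * k0 ^ 2 :=
  statement_15_general n N hn Q hQ S hS hSH θ νbar τ k0 ε σ hθ hτ hk0 lammax hmax hε hε' hσ d γ hγ K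
    v ν hv hν L hL H hH
end
end
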